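/- arXiv:2508.12048 — 3 statements merged into one kernel-verified Lean document; each statement's English description precedes it below -/
import Mathlib

section
/- Let Q(u) = 2√(F⁻¹(u)) · exp(−F⁻¹(u)/2) / (√(2π) u) for u ∈ (0,1), where F⁻¹ is the quantile function of the chi-squared distribution with one degree of freedom. Then Q is continuous and strictly decreasing on (0,1), with lim_{u→0⁺} Q(u) = 1 and lim_{u→1⁻} Q(u) = 0. -/
/-!
Write `G t = centralMass t = P(|N| ≤ t) = ∫_{-t}^{t} φ`, with `φ` the standard normal density.
`G` is an increasing bijection `(0, ∞) → (0, 1)` and `F⁻¹ (G t) = t²`, so in the variable `t`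
the function becomes `Q (G t) = 2 t φ(t) / G(t)`. Its derivative has the sign of
`h t = (1 - t²) G(t) - 2 t φ(t)`, and `h` is negative on `(0, ∞)` since `h 0 = 0` and
`h' t = -2 t G(t)`. As `t → 0`, `G(t) / t → 2 φ(0)` gives the limit `1`; as `t → ∞`,
`t φ(t) → 0` and `G(t) → 1` give the limit `0`.
-/

open Real MeasureTheory ProbabilityTheory Set Filter

/-- CDF of the chi-squared distribution with one degree of freedom. -/
noncomputable def chiSq1CDF : ℝ → ℝ :=
  fun z => ((gaussianReal 0 1) {x : ℝ | x ^ 2 ≤ z}).toReal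

/-- Quantile function of the χ²₁ distribution. -/
noncomputable def chiSq1Quantile : ℝ → ℝ :=
  fun u => sInf {z : ℝ | u ≤ chiSq1CDF z}

/-- The function Q of the paper. -/
noncomputable def Qfun : ℝ → ℝ :=
  fun u => 2 * Real.sqrt (chiSq1Quantile u) * Real.exp (-(chiSq1Quantile u) / 2) /
    (Real.sqrt (2 * π) * u)

open Topology

noncomputable section

def stdGaussianPDF (x : ℝ) : ℝ := (√(2 * π))⁻¹ * exp (-x ^ 2 / 2)

local notation "φ" => stdGaussianPDF

lemma gaussianPDFReal_zero_one : gaussianPDFReal 0 1 = φ := by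
  ext x
  simp [gaussianPDFReal, stdGaussianPDF]

lemma stdGaussianPDF_pos (x : ℝ) : 0 < φ x := by
  unfold stdGaussianPDF
  positivity

lemma continuous_stdGaussianPDF : Continuous φ := by
  unfold stdGaussianPDF
  fun_prop

lemma hasDerivAt_stdGaussianPDF (t : ℝ) : HasDerivAt φ (-t * φ t) t := by
  have hexponent : HasDerivAt (fun x : ℝ => -x ^ 2 / 2) (-t) t :=
    ((hasDerivAt_pow 2 t).neg.div_const 2).congr_deriv (by push_cast; ring)
  exact (hexponent.exp.const_mul (√(2 * π))⁻¹).congr_deriv (by rw [stdGaussianPDF]; ring)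

lemma tendsto_mul_stdGaussianPDF_atTop : Tendsto (fun t => t * φ t) atTop (𝓝 0) := by
  have h := (tendsto_rpow_abs_mul_exp_neg_mul_sq_cocompact (a := 1 / 2) (by norm_num) 1).mono_left
    atTop_le_cocompact
  have h' := h.const_mul (√(2 * π))⁻¹
  rw [mul_zero] at h'
  refine h'.congr' ?_
  filter_upwards [eventually_ge_atTop 0] with t ht
  simp only [stdGaussianPDF, rpow_one, abs_of_nonneg ht]
  ring_nf

def centralMass (t : ℝ) : ℝ := ∫ x in -t..t, φ x

lemma centralMass_eq_two_mul (t : ℝ) : centralMass t = 2 * ∫ x in 0..t, φ x := by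
  have hsymm : ∫ x in -t..0, φ x = ∫ x in 0..t, φ x := by
    simpa [stdGaussianPDF] using (intervalIntegral.integral_comp_neg (a := 0) (b := t) φ).symm
  rw [centralMass, ← intervalIntegral.integral_add_adjacent_intervals
    (continuous_stdGaussianPDF.intervalIntegrable _ 0)
    (continuous_stdGaussianPDF.intervalIntegrable 0 _), hsymm]
  ring

lemma hasDerivAt_centralMass (t : ℝ) : HasDerivAt centralMass (2 * φ t) t := by
  rw [show centralMass = fun t => 2 * ∫ x in 0..t, φ x from funext centralMass_eq_two_mul]
  exact ((continuous_stdGaussianPDF.integral_hasStrictDerivAt 0 t).hasDerivAt).const_mul 2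

lemma continuous_centralMass : Continuous centralMass :=
  continuous_iff_continuousAt.2 fun t => (hasDerivAt_centralMass t).continuousAt

lemma strictMono_centralMass : StrictMono centralMass :=
  strictMono_of_hasDerivAt_pos hasDerivAt_centralMass fun t =>
    mul_pos two_pos (stdGaussianPDF_pos t)

@[simp]
lemma centralMass_zero : centralMass 0 = 0 := by
  simp [centralMass]

lemma centralMass_pos {t : ℝ} (ht : 0 < t) : 0 < centralMass t :=
  centralMass_zero ▸ strictMono_centralMass ht

lemma tendsto_centralMass_atTop : Tendsto centralMass atTop (𝓝 1) := by
  have h := intervalIntegral_tendsto_integral (integrable_gaussianPDFReal 0 1)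
    tendsto_neg_atTop_atBot tendsto_id
  rwa [integral_gaussianPDFReal_eq_one 0 one_ne_zero, gaussianPDFReal_zero_one] at h

lemma centralMass_lt_one (t : ℝ) : centralMass t < 1 :=
  (strictMono_centralMass (lt_add_one t)).trans_le
    (strictMono_centralMass.monotone.ge_of_tendsto tendsto_centralMass_atTop _)

lemma chiSq1CDF_eq_centralMass_sqrt (z : ℝ) : chiSq1CDF z = centralMass √z := by
  rcases lt_or_ge z 0 with hz | hz
  · have hempty : {x : ℝ | x ^ 2 ≤ z} = ∅ :=
      eq_empty_of_forall_notMem fun x hx => (hz.trans_le (sq_nonneg x)).not_ge hx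
    simp [chiSq1CDF, hempty, sqrt_eq_zero_of_nonpos hz.le]
  · have hIcc : {x : ℝ | x ^ 2 ≤ z} = Icc (-√z) √z := by
      ext x
      simp only [mem_ofPred_eq, mem_Icc, ← abs_le, ← sqrt_sq_eq_abs, sqrt_le_sqrt_iff hz]
    rw [chiSq1CDF, hIcc, gaussianReal_apply_eq_integral 0 one_ne_zero, gaussianPDFReal_zero_one,
      ENNReal.toReal_ofReal (setIntegral_nonneg measurableSet_Icc fun x _ =>
        (stdGaussianPDF_pos x).le), centralMass,
      intervalIntegral.integral_of_le (neg_le_self (sqrt_nonneg z)), integral_Icc_eq_integral_Ioc]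

lemma chiSq1Quantile_centralMass {t : ℝ} (ht : 0 < t) :
    chiSq1Quantile (centralMass t) = t ^ 2 := by
  have hset : {z : ℝ | centralMass t ≤ chiSq1CDF z} = Ici (t ^ 2) := by
    ext z
    rw [mem_ofPred_eq, mem_Ici, chiSq1CDF_eq_centralMass_sqrt, strictMono_centralMass.le_iff_le]
    rcases le_or_gt 0 z with hz | hz
    · exact le_sqrt ht.le hz
    · rw [sqrt_eq_zero_of_nonpos hz.le]
      constructor <;> intro h <;> nlinarith
  rw [chiSq1Quantile, hset, csInf_Ici]

-- `Q` in the variable `t = √(F⁻¹ u)`.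
def radialQ (t : ℝ) : ℝ := 2 * t * φ t / centralMass t

lemma Qfun_centralMass {t : ℝ} (ht : 0 < t) : Qfun (centralMass t) = radialQ t := by
  rw [Qfun, radialQ, chiSq1Quantile_centralMass ht, sqrt_sq ht.le, stdGaussianPDF]
  have := centralMass_pos ht
  field_simp

lemma one_sub_sq_mul_centralMass_lt {t : ℝ} (ht : 0 < t) :
    (1 - t ^ 2) * centralMass t < 2 * t * φ t := by
  have hderiv (x : ℝ) : HasDerivAt (fun x => (1 - x ^ 2) * centralMass x - 2 * x * φ x)
      (-2 * x * centralMass x) x := by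
    refine ((((hasDerivAt_pow 2 x).const_sub 1).mul (hasDerivAt_centralMass x)).sub
      (((hasDerivAt_id x).const_mul 2).mul (hasDerivAt_stdGaussianPDF x))).congr_deriv ?_
    simp only [id_eq]
    push_cast
    ring
  have hanti : StrictAntiOn (fun x => (1 - x ^ 2) * centralMass x - 2 * x * φ x) (Ici 0) :=
    strictAntiOn_of_hasDerivWithinAt_neg (convex_Ici 0)
      (fun x _ => (hderiv x).continuousAt.continuousWithinAt)
      (fun x _ => (hderiv x).hasDerivWithinAt)
      (fun x hx => by
        rw [interior_Ici] at hx
        have := mul_pos hx (centralMass_pos hx)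
        linarith)
  have := hanti self_mem_Ici ht.le ht
  simp only [centralMass_zero] at this
  linarith

lemma hasDerivAt_radialQ {t : ℝ} (ht : 0 < t) :
    HasDerivAt radialQ ((2 * φ t * (1 - t ^ 2) * centralMass t - 2 * t * φ t * (2 * φ t)) /
      centralMass t ^ 2) t := by
  have hnum : HasDerivAt (fun t => 2 * t * φ t) (2 * φ t * (1 - t ^ 2)) t :=
    (((hasDerivAt_id t).const_mul 2).mul (hasDerivAt_stdGaussianPDF t)).congr_deriv (by
      simp only [id_eq]; ring)
  exact hnum.div (hasDerivAt_centralMass t) (centralMass_pos ht).ne'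

lemma continuousOn_radialQ : ContinuousOn radialQ (Ioi 0) :=
  fun _ ht => (hasDerivAt_radialQ ht).continuousAt.continuousWithinAt

lemma strictAntiOn_radialQ : StrictAntiOn radialQ (Ioi 0) := by
  refine strictAntiOn_of_hasDerivWithinAt_neg (convex_Ioi 0) continuousOn_radialQ
    (fun t ht => (hasDerivAt_radialQ (interior_subset ht)).hasDerivWithinAt) fun t ht => ?_
  rw [interior_Ioi] at ht
  have hlt := one_sub_sq_mul_centralMass_lt ht
  have := stdGaussianPDF_pos t
  have := centralMass_pos ht
  apply div_neg_of_neg_of_pos _ (by positivity)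
  nlinarith

lemma tendsto_radialQ_nhdsGT_zero : Tendsto radialQ (𝓝[>] 0) (𝓝 1) := by
  have hslope : Tendsto (fun t => centralMass t / t) (𝓝[>] 0) (𝓝 (2 * φ 0)) := by
    refine ((hasDerivAt_iff_tendsto_slope.1 (hasDerivAt_centralMass 0)).mono_left
      (nhdsWithin_mono 0 fun t ht => ne_of_gt ht)).congr' ?_
    filter_upwards with t
    simp [slope_def_field]
  have hφ : Tendsto (fun t => 2 * φ t) (𝓝[>] 0) (𝓝 (2 * φ 0)) :=
    ((continuous_stdGaussianPDF.tendsto 0).const_mul 2).mono_left nhdsWithin_le_nhds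
  have hne : 2 * φ 0 ≠ 0 := (mul_pos two_pos (stdGaussianPDF_pos 0)).ne'
  have h := hφ.mul (hslope.inv₀ hne)
  rw [mul_inv_cancel₀ hne] at h
  refine h.congr' ?_
  filter_upwards [self_mem_nhdsWithin] with t ht
  have := centralMass_pos ht
  rw [radialQ]
  field_simp

lemma tendsto_radialQ_atTop : Tendsto radialQ atTop (𝓝 0) := by
  have h := (tendsto_mul_stdGaussianPDF_atTop.const_mul 2).div tendsto_centralMass_atTop one_ne_zero
  simp only [mul_zero, zero_div] at h
  exact h.congr fun t => by simp only [Pi.div_apply, radialQ, mul_assoc]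

lemma surjOn_centralMass : SurjOn centralMass (Ioi 0) (Ioo 0 1) :=
  isPreconnected_Ioi.intermediate_value_Ioo (l₁ := 𝓝[>] (0 : ℝ)) (l₂ := atTop)
    (le_principal_iff.2 self_mem_nhdsWithin) (le_principal_iff.2 (Ioi_mem_atTop 0))
    continuous_centralMass.continuousOn
    ((continuous_centralMass.tendsto' 0 0 centralMass_zero).mono_left nhdsWithin_le_nhds)
    tendsto_centralMass_atTop

def centralMassOrderIso : Ioi (0 : ℝ) ≃o Ioo (0 : ℝ) 1 :=
  StrictMono.orderIsoOfSurjective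
    (fun t => ⟨centralMass t, centralMass_pos t.2, centralMass_lt_one t⟩)
    (fun _ _ h => strictMono_centralMass h)
    (fun u => by
      obtain ⟨t, ht, htu⟩ := surjOn_centralMass u.2
      exact ⟨⟨t, ht⟩, Subtype.ext htu⟩)

lemma Qfun_eq_radialQ_symm (u : Ioo (0 : ℝ) 1) :
    Qfun u = radialQ (centralMassOrderIso.symm u) := by
  conv_lhs => rw [← centralMassOrderIso.apply_symm_apply u]
  exact Qfun_centralMass (centralMassOrderIso.symm u).2

end

/-- Q is continuous, strictly decreasing on (0,1), with limits 1 at 0⁺ and 0 at 1⁻. -/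
theorem Qfun_properties :
    ContinuousOn Qfun (Ioo (0:ℝ) 1) ∧ StrictAntiOn Qfun (Ioo (0:ℝ) 1) ∧
      Tendsto Qfun (nhdsWithin 0 (Ioi 0)) (nhds 1) ∧
      Tendsto Qfun (nhdsWithin 1 (Iio 1)) (nhds 0) := by
  have hQ : (fun u : Ioo (0 : ℝ) 1 => Qfun u) = fun u => radialQ (centralMassOrderIso.symm u) :=
    funext Qfun_eq_radialQ_symm
  refine ⟨?_, ?_, ?_, ?_⟩
  · rw [continuousOn_iff_continuous_domRestrict]
    change Continuous fun u : Ioo (0 : ℝ) 1 => Qfun u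
    rw [hQ]
    exact continuousOn_radialQ.domRestrict.comp centralMassOrderIso.symm.continuous
  · intro u hu v hv huv
    rw [Qfun_eq_radialQ_symm ⟨u, hu⟩, Qfun_eq_radialQ_symm ⟨v, hv⟩]
    exact strictAntiOn_radialQ (Subtype.prop _) (Subtype.prop _)
      (centralMassOrderIso.symm.strictMono (a := ⟨u, hu⟩) (b := ⟨v, hv⟩) huv)
  · rw [← tendsto_comp_coe_Ioo_atBot zero_lt_one, hQ]
    exact ((tendsto_comp_coe_Ioi_atBot (a := (0 : ℝ))).2 tendsto_radialQ_nhdsGT_zero).comp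
      centralMassOrderIso.symm.tendsto_atBot
  · rw [← tendsto_comp_coe_Ioo_atTop zero_lt_one, hQ]
    exact (tendsto_comp_val_Ioi_atTop.2 tendsto_radialQ_atTop).comp
      centralMassOrderIso.symm.tendsto_atTop
end

section
/- If U is uniform on (0, b) with 0 < b < 1 and F⁻¹ is the χ²₁ quantile function, then the random variable X = F⁻¹(U) satisfies E[X] = 1 − 2√(F⁻¹(b))·exp(−F⁻¹(b)/2)/(√(2π) b). -/
open Real MeasureTheory ProbabilityTheory Set

open Filter Topology

lemma gaussianPDFReal_zero_one_s11 (x : ℝ) :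
    gaussianPDFReal 0 1 x = (√(2 * π))⁻¹ * exp (-x ^ 2 / 2) := by
  simp [gaussianPDFReal]

lemma continuous_gaussianPDFReal (μ : ℝ) (v : NNReal) : Continuous (gaussianPDFReal μ v) := by
  unfold gaussianPDFReal
  fun_prop

lemma gaussianPDFReal_zero_neg (v : NNReal) (x : ℝ) :
    gaussianPDFReal 0 v (-x) = gaussianPDFReal 0 v x := by
  simp [gaussianPDFReal]

lemma hasDerivAt_gaussianPDFReal (μ : ℝ) (v : NNReal) (x : ℝ) :
    HasDerivAt (gaussianPDFReal μ v) (-(x - μ) / v * gaussianPDFReal μ v x) x := by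
  have hexponent : HasDerivAt (fun y => -(y - μ) ^ 2 / (2 * v)) (-(x - μ) / v) x :=
    ((((hasDerivAt_id' x).sub_const μ).pow 2).neg.div_const (2 * (v : ℝ))).congr_deriv
      (by norm_num; ring)
  rw [gaussianPDFReal_def]
  exact (hexponent.exp.const_mul _).congr_deriv (by ring)

lemma integral_sq_mul_gaussianPDFReal (s : ℝ) :
    ∫ x in 0..s, x ^ 2 * gaussianPDFReal 0 1 x =
      (∫ x in 0..s, gaussianPDFReal 0 1 x) - s * gaussianPDFReal 0 1 s := by
  have hφ := continuous_gaussianPDFReal 0 1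
  have hsq : Continuous fun x => x ^ 2 * gaussianPDFReal 0 1 x := (continuous_pow 2).mul hφ
  have hderiv : ∀ x ∈ uIcc 0 s, HasDerivAt (fun x => x * gaussianPDFReal 0 1 x)
      (gaussianPDFReal 0 1 x - x ^ 2 * gaussianPDFReal 0 1 x) x := fun x _ =>
    ((hasDerivAt_id' x).mul (hasDerivAt_gaussianPDFReal 0 1 x)).congr_deriv (by simp; ring)
  have h := intervalIntegral.integral_eq_sub_of_hasDerivAt hderiv
    ((hφ.sub hsq).intervalIntegrable 0 s)
  rw [intervalIntegral.integral_sub (hφ.intervalIntegrable 0 s) (hsq.intervalIntegrable 0 s)] at h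
  linarith

noncomputable def halfNormalCDF (t : ℝ) : ℝ :=
  2 * ∫ x in 0..t, gaussianPDFReal 0 1 x

lemma hasDerivAt_halfNormalCDF (t : ℝ) :
    HasDerivAt halfNormalCDF (2 * gaussianPDFReal 0 1 t) t :=
  ((continuous_gaussianPDFReal 0 1).integral_hasStrictDerivAt 0 t).hasDerivAt.const_mul 2

@[simp]
lemma halfNormalCDF_zero : halfNormalCDF 0 = 0 := by
  simp [halfNormalCDF]

lemma continuous_halfNormalCDF : Continuous halfNormalCDF :=
  continuous_iff_continuousAt.mpr fun t => (hasDerivAt_halfNormalCDF t).continuousAt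

lemma strictMono_halfNormalCDF : StrictMono halfNormalCDF :=
  strictMono_of_deriv_pos fun t => by
    rw [(hasDerivAt_halfNormalCDF t).deriv]
    exact mul_pos two_pos (gaussianPDFReal_pos 0 1 t one_ne_zero)

lemma tendsto_halfNormalCDF_atTop : Tendsto halfNormalCDF atTop (𝓝 1) := by
  have hhalf : ∫ x in Ioi (0 : ℝ), gaussianPDFReal 0 1 x = 1 / 2 := by
    have hexp (x : ℝ) : exp (-x ^ 2 / 2) = exp (-(1 / 2) * x ^ 2) := by ring_nf
    simp_rw [gaussianPDFReal_zero_one_s11, hexp, integral_const_mul, integral_gaussian_Ioi]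
    rw [show π / (1 / 2) = 2 * π by ring]
    field_simp
  have hint : IntegrableOn (gaussianPDFReal 0 1) (Ioi 0) :=
    (integrable_gaussianPDFReal 0 1).integrableOn
  have h := (intervalIntegral_tendsto_integral_Ioi 0 hint tendsto_id).const_mul 2
  rwa [hhalf, mul_one_div_cancel two_ne_zero] at h

lemma chiSq1CDF_eq_halfNormalCDF_sqrt {z : ℝ} (hz : 0 ≤ z) :
    chiSq1CDF z = halfNormalCDF √z := by
  set a := √z
  have hset : {x : ℝ | x ^ 2 ≤ z} = Icc (-a) a := by
    ext x
    rw [mem_ofPred_eq, mem_Icc, ← abs_le, ← sqrt_le_sqrt_iff hz, sqrt_sq_eq_abs]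
  have hφ := continuous_gaussianPDFReal 0 1
  have hsymm : ∫ x in -a..0, gaussianPDFReal 0 1 x = ∫ x in 0..a, gaussianPDFReal 0 1 x := by
    simpa [gaussianPDFReal_zero_neg] using
      (intervalIntegral.integral_comp_neg (a := 0) (b := a) (gaussianPDFReal 0 1)).symm
  rw [chiSq1CDF, hset, gaussianReal_apply_eq_integral 0 one_ne_zero,
    ENNReal.toReal_ofReal
      (setIntegral_nonneg measurableSet_Icc fun x _ => gaussianPDFReal_nonneg 0 1 x),
    integral_Icc_eq_integral_Ioc, ← intervalIntegral.integral_of_le (by simp [a]),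
    ← intervalIntegral.integral_add_adjacent_intervals (b := 0) (hφ.intervalIntegrable _ _)
      (hφ.intervalIntegrable _ _), hsymm, halfNormalCDF, two_mul]

lemma chiSq1CDF_of_neg {z : ℝ} (hz : z < 0) : chiSq1CDF z = 0 := by
  have hset : {x : ℝ | x ^ 2 ≤ z} = ∅ :=
    eq_empty_of_forall_notMem fun x hx => (hz.trans_le (sq_nonneg x)).not_ge hx
  simp [chiSq1CDF, hset]

-- The true value, obtained through the junk value `sInf univ = 0` since `F ≥ 0` everywhere.
lemma chiSq1Quantile_zero : chiSq1Quantile 0 = 0 := by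
  have hset : {z : ℝ | (0 : ℝ) ≤ chiSq1CDF z} = univ :=
    eq_univ_of_forall fun z => ENNReal.toReal_nonneg
  rw [chiSq1Quantile, hset]
  exact sInf_of_not_bddBelow not_bddBelow_univ

lemma chiSq1Quantile_halfNormalCDF {t : ℝ} (ht : 0 ≤ t) :
    chiSq1Quantile (halfNormalCDF t) = t ^ 2 := by
  rcases ht.eq_or_lt with rfl | ht
  · simp [chiSq1Quantile_zero]
  have hset : {z : ℝ | halfNormalCDF t ≤ chiSq1CDF z} = Ici (t ^ 2) := by
    ext z
    rw [mem_ofPred_eq, mem_Ici]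
    rcases lt_or_ge z 0 with hz | hz
    · have hpos : 0 < halfNormalCDF t := halfNormalCDF_zero ▸ strictMono_halfNormalCDF ht
      rw [chiSq1CDF_of_neg hz]
      exact iff_of_false hpos.not_ge (hz.trans_le (sq_nonneg t)).not_ge
    · rw [chiSq1CDF_eq_halfNormalCDF_sqrt hz, strictMono_halfNormalCDF.le_iff_le,
        le_sqrt ht.le hz]
  rw [chiSq1Quantile, hset, csInf_Ici]

lemma exists_pos_halfNormalCDF_eq {b : ℝ} (hb0 : 0 < b) (hb1 : b < 1) :
    ∃ s, 0 < s ∧ halfNormalCDF s = b := by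
  obtain ⟨s, hs⟩ : b ∈ range halfNormalCDF :=
    mem_range_of_exists_le_of_exists_ge continuous_halfNormalCDF ⟨0, by simpa using hb0.le⟩
      ((tendsto_halfNormalCDF_atTop.eventually (eventually_gt_nhds hb1)).exists.imp
        fun _ => le_of_lt)
  refine ⟨s, strictMono_halfNormalCDF.lt_iff_lt.mp ?_, hs⟩
  rwa [hs, halfNormalCDF_zero]

lemma integral_chiSq1Quantile_halfNormalCDF {s : ℝ} (hs : 0 ≤ s) :
    ∫ u in 0..halfNormalCDF s, chiSq1Quantile u =
      2 * ∫ t in 0..s, t ^ 2 * gaussianPDFReal 0 1 t := by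
  have himage : halfNormalCDF '' Icc 0 s = Icc 0 (halfNormalCDF s) := by
    rw [continuous_halfNormalCDF.image_Icc_of_strictMono strictMono_halfNormalCDF,
      halfNormalCDF_zero]
  rw [intervalIntegral.integral_of_le (halfNormalCDF_zero ▸ strictMono_halfNormalCDF.monotone hs),
    intervalIntegral.integral_of_le hs, ← integral_Icc_eq_integral_Ioc,
    ← integral_Icc_eq_integral_Ioc, ← himage,
    integral_image_eq_integral_abs_deriv_smul measurableSet_Icc
      (fun t _ => (hasDerivAt_halfNormalCDF t).hasDerivWithinAt)
      strictMono_halfNormalCDF.injective.injOn, ← integral_const_mul]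
  refine setIntegral_congr_fun measurableSet_Icc fun t ht => ?_
  rw [abs_of_pos (mul_pos two_pos (gaussianPDFReal_pos 0 1 t one_ne_zero)), smul_eq_mul,
    chiSq1Quantile_halfNormalCDF ht.1]
  ring

/-- Mean of the left-truncated χ²₁ variable F⁻¹(U), U ∼ Uniform(0,b). -/
theorem truncated_chiSq_mean (b : ℝ) (hb0 : 0 < b) (hb1 : b < 1) :
    (∫ u in (0:ℝ)..b, chiSq1Quantile u) / b =
      1 - 2 * Real.sqrt (chiSq1Quantile b) * Real.exp (-(chiSq1Quantile b) / 2) /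
        (Real.sqrt (2 * π) * b) := by
  obtain ⟨s, hs, rfl⟩ := exists_pos_halfNormalCDF_eq hb0 hb1
  rw [chiSq1Quantile_halfNormalCDF hs.le, integral_chiSq1Quantile_halfNormalCDF hs.le,
    integral_sq_mul_gaussianPDFReal, sqrt_sq hs.le, gaussianPDFReal_zero_one_s11 s]
  have hmass : ∫ x in 0..s, gaussianPDFReal 0 1 x ≠ 0 := right_ne_zero_of_mul hb0.ne'
  rw [halfNormalCDF]
  field_simp
end

section
/- Let K be a Binomial(n, p) random variable. For every c > 0, P(√(K/n) > √p + √c) < e^{−2cn}. -/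
/-!
With `a = (√p + √c) ^ 2`, the event is `{K > n a}`. Chernoff's bound with the optimal
exponent gives `P(K > n a) < exp (-n D(a ‖ p))`, where `D` is the relative entropy of
Bernoulli laws. It remains to show `D(v ^ 2 ‖ u ^ 2) ≥ 2 (v - u) ^ 2` for `0 < u ≤ v < 1`,
which follows from the bounds `2 t ≤ log ((1 + t) / (1 - t)) ≤ 2 t / (1 - t ^ 2)` read off
the series of `artanh`.
-/

open MeasureTheory Real Finset
open scoped NNReal

set_option linter.deprecated false

theorem one_add_div_one_sub_sub_div_add {x y : ℝ} (hxy : y + x ≠ 0) :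
    (1 + (y - x) / (y + x)) / (1 - (y - x) / (y + x)) = y / x := by
  rw [one_add_div hxy, one_sub_div hxy, div_div_div_cancel_right₀ hxy]
  ring_nf

theorem two_mul_sub_div_add_le_log_div {x y : ℝ} (hx : 0 < x) (hxy : x ≤ y) :
    2 * (y - x) / (y + x) ≤ log (y / x) := by
  have ht : (y - x) / (y + x) < 1 := by rw [div_lt_one (by linarith)]; linarith
  have key := sum_range_le_log_div (div_nonneg (by linarith) (by linarith)) ht 1
  rw [one_add_div_one_sub_sub_div_add (by linarith)] at key
  norm_num at key
  rw [mul_div_assoc]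
  linarith

theorem log_div_le_sq_sub_sq_div {x y : ℝ} (hx : 0 < x) (hxy : x ≤ y) :
    log (y / x) ≤ (y ^ 2 - x ^ 2) / (2 * x * y) := by
  have ht : (y - x) / (y + x) < 1 := by rw [div_lt_one (by linarith)]; linarith
  have key := log_div_le_sum_range_add (div_nonneg (by linarith) (by linarith)) ht 0
  rw [one_add_div_one_sub_sub_div_add (by linarith)] at key
  have hterm : (y - x) / (y + x) / (1 - ((y - x) / (y + x)) ^ 2) =
      (y ^ 2 - x ^ 2) / (4 * x * y) := by
    have hyx : y + x ≠ 0 := by linarith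
    have hden : (y + x) ^ 2 - (y - x) ^ 2 = 4 * x * y := by ring
    rw [div_pow, one_sub_div (pow_ne_zero 2 hyx), hden]
    field_simp
    ring
  simp only [sum_range_zero, zero_add, mul_zero, pow_one, hterm] at key
  rw [show (y ^ 2 - x ^ 2) / (2 * x * y) = 2 * ((y ^ 2 - x ^ 2) / (4 * x * y)) by ring]
  linarith

noncomputable def bernoulliKL (a q : ℝ) : ℝ :=
  a * log (a / q) + (1 - a) * log ((1 - a) / (1 - q))

theorem two_mul_sq_sub_le_bernoulliKL_sq {u v : ℝ} (hu : 0 < u) (huv : u ≤ v) (hv : v < 1) :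
    2 * (v - u) ^ 2 ≤ bernoulliKL (v ^ 2) (u ^ 2) := by
  have hv0 : 0 < v := hu.trans_le huv
  have hv2 : 0 < 1 - v ^ 2 := by nlinarith
  have hu2 : 0 < 1 - u ^ 2 := by nlinarith
  have hlog₁ : 2 * (2 * (v - u) / (v + u)) ≤ log (v ^ 2 / u ^ 2) := by
    rw [← div_pow, log_pow]
    push_cast
    gcongr
    exact two_mul_sub_div_add_le_log_div hu huv
  have hlog₂ : -(((1 - u ^ 2) ^ 2 - (1 - v ^ 2) ^ 2) / (2 * (1 - v ^ 2) * (1 - u ^ 2))) ≤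
      log ((1 - v ^ 2) / (1 - u ^ 2)) := by
    rw [← neg_neg (log _), ← log_inv, inv_div, neg_le_neg_iff]
    exact log_div_le_sq_sub_sq_div hv2 (by nlinarith)
  calc 2 * (v - u) ^ 2
      ≤ v ^ 2 * (2 * (2 * (v - u) / (v + u))) + (1 - v ^ 2) *
          -(((1 - u ^ 2) ^ 2 - (1 - v ^ 2) ^ 2) / (2 * (1 - v ^ 2) * (1 - u ^ 2))) := by
        rw [← sub_nonneg]
        have key : v ^ 2 * (2 * (2 * (v - u) / (v + u))) + (1 - v ^ 2) *
          -(((1 - u ^ 2) ^ 2 - (1 - v ^ 2) ^ 2) / (2 * (1 - v ^ 2) * (1 - u ^ 2))) - 2 * (v - u) ^ 2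
            = (v - u) ^ 2 * (2 * (v - u) + v ^ 3 + 3 * u * v ^ 2 + u ^ 2 * v + 3 * u ^ 3) /
              (2 * (v + u) * (1 - u ^ 2)) := by
          field_simp
          ring
        rw [key]
        have : 0 ≤ v - u := by linarith
        positivity
    _ ≤ bernoulliKL (v ^ 2) (u ^ 2) := by
        unfold bernoulliKL
        gcongr

theorem PMF.binomial_toMeasure_toReal (q : ℝ≥0) (hq : q ≤ 1) (n : ℕ) (s : Set (Fin (n + 1)))
    [DecidablePred (· ∈ s)] :
    ((PMF.binomial q hq n).toMeasure s).toReal =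
      ∑ k with k ∈ s, (q : ℝ) ^ (k : ℕ) * (1 - q) ^ (n - k) * n.choose k := by
  rw [PMF.toMeasure_apply_fintype, ENNReal.toReal_sum (fun k _ => ?_), sum_filter]
  · refine sum_congr rfl fun k _ => ?_
    by_cases hk : k ∈ s
    · simp [hk, PMF.binomial_apply, ENNReal.toReal_sub_of_le, hq]
    · simp [hk]
  · exact (Set.indicator_le_self s _ k).trans_lt (PMF.apply_lt_top _ _) |>.ne

theorem binomial_sum_mul_exp (q t a : ℝ) (n : ℕ) :
    ∑ k : Fin (n + 1), q ^ (k : ℕ) * (1 - q) ^ (n - k) * n.choose k * exp (t * (k - n * a)) =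
      (exp (-(t * a)) * (q * exp t + (1 - q))) ^ n := by
  rw [mul_pow, add_pow, mul_sum, Fin.sum_univ_eq_sum_range
    (fun k => q ^ k * (1 - q) ^ (n - k) * n.choose k * exp (t * (k - n * a)))]
  refine sum_congr rfl fun k _ => ?_
  rw [show t * (k - n * a) = k * t + n * -(t * a) by ring, exp_add, exp_nat_mul, exp_nat_mul]
  ring

theorem binomial_tail_sum_lt {q a t : ℝ} (n : ℕ) (hq0 : 0 ≤ q) (hq1 : q < 1) (ha : 0 ≤ a)
    (ht : 0 ≤ t) :
    ∑ k : Fin (n + 1) with n * a < k.val, q ^ (k : ℕ) * (1 - q) ^ (n - k) * n.choose k <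
      (exp (-(t * a)) * (q * exp t + (1 - q))) ^ n := by
  have hw : ∀ k : ℕ, 0 ≤ q ^ k * (1 - q) ^ (n - k) * n.choose k := fun k => by
    have : 0 ≤ 1 - q := by linarith
    positivity
  rw [← binomial_sum_mul_exp, sum_filter]
  refine sum_lt_sum (fun k _ => ?_) ⟨0, mem_univ _, ?_⟩
  · split_ifs with hk
    · exact le_mul_of_one_le_right (hw k) (one_le_exp (by nlinarith))
    · exact mul_nonneg (hw k) (exp_pos _).le
  · -- the term `k = 0` lies outside the tail but contributes `(1 - q) ^ n > 0`
    have : 0 < 1 - q := by linarith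
    simp only [Fin.val_zero, Nat.cast_zero, not_lt.2 (by positivity : 0 ≤ n * a), if_false]
    simpa using mul_pos (pow_pos this n) (exp_pos _)

-- `log (a / q) - log ((1 - a) / (1 - q))` is the optimal exponent in Chernoff's bound.
theorem exp_neg_bernoulliKL_eq {q a : ℝ} (hq0 : 0 < q) (hq1 : q < 1) (ha0 : 0 < a)
    (ha1 : a < 1) :
    exp (-bernoulliKL a q) =
      exp (-((log (a / q) - log ((1 - a) / (1 - q))) * a)) *
        (q * exp (log (a / q) - log ((1 - a) / (1 - q))) + (1 - q)) := by
  have h1q : 0 < 1 - q := by linarith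
  have h1a : 0 < 1 - a := by linarith
  have hmgf : q * exp (log (a / q) - log ((1 - a) / (1 - q))) + (1 - q) =
      exp (-log ((1 - a) / (1 - q))) := by
    rw [exp_sub, exp_neg, exp_log (by positivity), exp_log (by positivity)]
    field_simp
    ring
  rw [hmgf, ← exp_add, bernoulliKL]
  ring_nf

theorem PMF.binomial_tail_lt_exp_neg_bernoulliKL (q : ℝ≥0) (hq : q ≤ 1) (n : ℕ) {a : ℝ}
    (hq0 : (0 : ℝ) < q) (hqa : q < a) (ha1 : a < 1) :
    ((PMF.binomial q hq n).toMeasure {k | n * a < (k : ℕ)}).toReal <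
      exp (-(n * bernoulliKL a q)) := by
  have ha0 : 0 < a := hq0.trans hqa
  have ht : 0 ≤ log (a / q) - log ((1 - a) / (1 - q)) := by
    have h1 : 0 ≤ log (a / q) := log_nonneg ((one_le_div hq0).2 hqa.le)
    have h2 : log ((1 - a) / (1 - q)) ≤ 0 := log_nonpos (div_nonneg (by linarith) (by linarith))
      ((div_le_one (by linarith)).2 (by linarith))
    linarith
  rw [PMF.binomial_toMeasure_toReal, ← mul_neg, exp_nat_mul,
    exp_neg_bernoulliKL_eq hq0 (hqa.trans ha1) ha0 ha1]
  simpa only [Set.mem_setOf_eq] using binomial_tail_sum_lt n hq0.le (hqa.trans ha1) ha0.le ht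

theorem PMF.binomial_tail_sqrt_add_sqrt_lt (q : ℝ≥0) (hq : q ≤ 1) (n : ℕ) {c : ℝ}
    (hc : 0 < c) :
    ((PMF.binomial q hq n).toMeasure {k | n * (√q + √c) ^ 2 < (k : ℕ)}).toReal <
      exp (-2 * c * n) := by
  set v := √q + √c
  have hv : 0 < v := by positivity
  by_cases hdeg : q = 0 ∨ 1 ≤ v
  · -- the tail is empty when `1 ≤ v`, and has no mass when `q = 0`
    suffices ((PMF.binomial q hq n).toMeasure {k | n * v ^ 2 < (k : ℕ)}).toReal = 0 by
      rw [this]; positivity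
    rw [PMF.binomial_toMeasure_toReal]
    refine sum_eq_zero fun k hk => ?_
    simp only [Set.mem_setOf_eq, mem_filter, mem_univ, true_and] at hk
    rcases hdeg with rfl | hv1
    · have hk0 : (k : ℕ) ≠ 0 := by
        rintro hk0
        rw [hk0, Nat.cast_zero] at hk
        exact hk.not_ge (by positivity)
      simp [hk0]
    · have hkn : (k : ℝ) ≤ n := by exact_mod_cast k.is_le
      have hnv : (n : ℝ) ≤ n * v ^ 2 := le_mul_of_one_le_right n.cast_nonneg (one_le_pow₀ hv1)
      linarith
  obtain ⟨hq0, hv1⟩ : (0 : ℝ) < q ∧ v < 1 := by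
    simpa [not_or, pos_iff_ne_zero] using hdeg
  have hqv : (q : ℝ) < v ^ 2 := by
    have : √q < v := by simp [v, hc]
    simpa using (sqrt_lt' hv).1 this
  calc _ < exp (-(n * bernoulliKL (v ^ 2) q)) :=
        PMF.binomial_tail_lt_exp_neg_bernoulliKL q hq n hq0 hqv (by nlinarith)
    _ ≤ exp (-2 * c * n) := by
        have h := two_mul_sq_sub_le_bernoulliKL_sq (sqrt_pos.2 hq0) (by simp [v]) hv1
        simp only [v, add_sub_cancel_left, sq_sqrt hc.le, sq_sqrt q.coe_nonneg] at h
        have := mul_le_mul_of_nonneg_left h n.cast_nonneg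
        rw [exp_le_exp]
        linarith

theorem mul_sq_lt_of_lt_sqrt_div {v x : ℝ} {n : ℕ} (hv : 0 ≤ v) (h : v < √(x / n)) :
    n * v ^ 2 < x := by
  have h2 := (lt_sqrt hv).1 h
  rcases n.eq_zero_or_pos with rfl | hn
  · rw [Nat.cast_zero, div_zero] at h2
    exact absurd h2 (sq_nonneg v).not_gt
  · rwa [lt_div_iff₀ (by positivity), mul_comm] at h2

/-- Okamoto's inequality for the square root of a binomial proportion. -/
theorem okamoto_inequality (n : ℕ) (p : ℝ)
    (hple : ENNReal.ofReal p ≤ 1)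
    (c : ℝ) (hc : 0 < c) :
    (((PMF.binomial (ENNReal.ofReal p).toNNReal
          (by simpa using ENNReal.toNNReal_mono ENNReal.one_ne_top hple) n).toMeasure
        {k : Fin (n + 1) | Real.sqrt p + Real.sqrt c < Real.sqrt ((k : ℕ) / n)}).toReal) <
      Real.exp (-2 * c * n) := by
  have hsqrt : √p = √((ENNReal.ofReal p).toNNReal : ℝ) := by
    rw [ENNReal.coe_toNNReal_eq_toReal, ENNReal.toReal_ofReal']
    rcases le_total p 0 with hp | hp
    · simp [hp, sqrt_eq_zero'.2 hp]
    · rw [max_eq_left hp]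
  refine lt_of_le_of_lt (ENNReal.toReal_mono (measure_ne_top _ _) (measure_mono ?_))
    (PMF.binomial_tail_sqrt_add_sqrt_lt _ _ n hc)
  intro k hk
  rw [hsqrt] at hk
  exact mul_sq_lt_of_lt_sqrt_div (by positivity) hk
end
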